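/- Factorial moments of the Poisson log-normal distribution: let x ~ N(μ, Θ⁻¹) be a p-dimensional Gaussian vector and, conditionally on x, let y = (y_1,…,y_p) have independent Poisson coordinates with y_j ~ Poisson(exp(x_j)). For y,n ∈ ℕ define the falling factorial φ(y,n) = ∏_{i=1}^n (y−i+1) for n>0 and φ(y,0)=1. Then for any N = (n_1,…,n_p)ᵀ ∈ ℕᵖ, E[ ∏_{j=1}^p φ(y_j, n_j) ] = exp( Nᵀμ + NᵀΘ⁻¹N/2 ). -/

import Mathlib

open MeasureTheory Filter

noncomputable section

/-- falling factorial `φ(y,n) = y(y-1)⋯(y-n+1)` as a real number. -/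
def fallFact (y n : ℕ) : ℝ := ∏ i ∈ Finset.range n, ((y : ℝ) - (i : ℝ))

/-- density of the Gaussian distribution `N(μ, Θ⁻¹)`. -/
def gaussDensity {p : ℕ} (Θ : Matrix (Fin p) (Fin p) ℝ) (μ : Fin p → ℝ) (x : Fin p → ℝ) : ℝ :=
  (2 * Real.pi) ^ (-(p : ℝ) / 2) * Real.sqrt Θ.det *
    Real.exp (-(dotProduct (x - μ) (Θ.mulVec (x - μ))) / 2)

/-- Poisson log-normal density on `ℕᵖ`. -/
def plnDensity {p : ℕ} (Θ : Matrix (Fin p) (Fin p) ℝ) (μ : Fin p → ℝ) (y : Fin p → ℕ) : ℝ :=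
  ∫ x : Fin p → ℝ, gaussDensity Θ μ x *
    ∏ j, Real.exp (x j * (y j : ℝ) - Real.exp (x j)) / (Nat.factorial (y j) : ℝ)

/-- `Θ` is symmetric with all eigenvalues in `[m, M]`. -/
def eigBounds {p : ℕ} (m M : ℝ) (Θ : Matrix (Fin p) (Fin p) ℝ) : Prop :=
  Θ.IsSymm ∧ ∀ v : Fin p → ℝ,
    m * (∑ i, v i ^ 2) ≤ dotProduct v (Θ.mulVec v) ∧
      dotProduct v (Θ.mulVec v) ≤ M * (∑ i, v i ^ 2)

/-- Index set of the half-vectorization `vech` of a symmetric `p × p` matrix. -/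
abbrev VechIdx (p : ℕ) := {ij : Fin p × Fin p // ij.1 ≤ ij.2}

/-- symmetric matrix built from a half-vectorization. -/
def toMat {p : ℕ} (v : VechIdx p → ℝ) : Matrix (Fin p) (Fin p) ℝ :=
  fun i j => if h : i ≤ j then v ⟨(i, j), h⟩ else v ⟨(j, i), le_of_not_ge h⟩

/-- mixture Poisson log-normal density with proportions `pw`, means `μs` and
precision matrices encoded by `ν`. -/
def mixDensity {p G : ℕ} (pw : Fin G → ℝ) (μs : Fin G → Fin p → ℝ)
    (ν : Fin G × VechIdx p → ℝ) (y : Fin p → ℕ) : ℝ :=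
  ∑ g, pw g * plnDensity (toMat fun ij => ν (g, ij)) (μs g) y

/-- the parameter space `D`. -/
def paramSet (p G : ℕ) (m M : ℝ) : Set (Fin G × VechIdx p → ℝ) :=
  {ν | ∀ g, eigBounds m M (toMat fun ij => ν (g, ij))}

/-- Condition (C3): bounded and pairwise distinct mean vectors. -/
def condC3 {p G : ℕ} (M : ℝ) (μs : Fin G → Fin p → ℝ) : Prop :=
  (∀ g, ‖μs g‖ ≤ M) ∧ Function.Injective μs

/-- the mixture Poisson log-normal distribution, as a measure on `ℕᵖ`. -/
def mixMeasure {p G : ℕ} (pw : Fin G → ℝ) (μs : Fin G → Fin p → ℝ)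
    (ν : Fin G × VechIdx p → ℝ) : Measure (Fin p → ℕ) :=
  Measure.sum fun y => (ENNReal.ofReal (mixDensity pw μs ν y)) • Measure.dirac y

/-- euclidean (`ℓ₂`) norm of a vector. -/
def l2norm {ι : Type*} [Fintype ι] (v : ι → ℝ) : ℝ := Real.sqrt (∑ i, v i ^ 2)

/-- gradient (vector of partial derivatives) of `f` at `x`. -/
def gradAt {ι : Type*} [Fintype ι] [DecidableEq ι] (f : (ι → ℝ) → ℝ) (x : ι → ℝ) : ι → ℝ :=
  fun a => fderiv ℝ f x (Pi.single a 1)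

/-- `(a,b)` entry of the Hessian matrix of `f` at `x`. -/
def hessAt {ι : Type*} [Fintype ι] [DecidableEq ι] (f : (ι → ℝ) → ℝ) (x : ι → ℝ)
    (a b : ι) : ℝ :=
  fderiv ℝ (fun z => fderiv ℝ f z (Pi.single b 1)) x (Pi.single a 1)

/-- Fisher information matrix of the mixture Poisson log-normal model at `ν`. -/
def fisherInfo {p G : ℕ} (pw : Fin G → ℝ) (μs : Fin G → Fin p → ℝ)
    (ν : Fin G × VechIdx p → ℝ) :
    Matrix (Fin G × VechIdx p) (Fin G × VechIdx p) ℝ :=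
  fun a b => ∑' y : Fin p → ℕ, mixDensity pw μs ν y *
    (gradAt (fun ν' => Real.log (mixDensity pw μs ν' y)) ν a *
      gradAt (fun ν' => Real.log (mixDensity pw μs ν' y)) ν b)

/-- the lasso penalty `R(ν) = Σ_g Σ_{l≠m} |Θ_{g,lm}|`. -/
def penR {p G : ℕ} (ν : Fin G × VechIdx p → ℝ) : ℝ :=
  ∑ g : Fin G, ∑ l : Fin p, ∑ m' : Fin p,
    if l ≠ m' then |toMat (fun ij => ν (g, ij)) l m'| else 0

/-- the penalized negative log-likelihood objective `−n⁻¹ℓₙ(ν) + λ R(ν)`. -/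
def objective {p G : ℕ} (pw : Fin G → ℝ) (μs : Fin G → Fin p → ℝ) (lam : ℝ) (n : ℕ)
    (ys : ℕ → Fin p → ℕ) (ν : Fin G × VechIdx p → ℝ) : ℝ :=
  -(1 / n : ℝ) * ∑ i ∈ Finset.range n, Real.log (mixDensity pw μs ν (ys i)) + lam * penR ν

/-- maximum absolute row sum norm `‖A‖_{1,∞}`. -/
def maxRowSum {a b : Type*} [Fintype b] (A : Matrix a b ℝ) : ℝ := ⨆ i, ∑ j, |A i j|

/-- spectral norm of a real matrix. -/
def specNorm {ι : Type*} [Fintype ι] (A : Matrix ι ι ℝ) : ℝ :=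
  ⨆ v : ι → ℝ, l2norm (A.mulVec v) / l2norm v

/-- Poisson probability mass function with rate `r`. -/
def poissonPMF (r : ℝ) (k : ℕ) : ℝ := Real.exp (-r) * r ^ k / (Nat.factorial k : ℝ)

end

open MeasureTheory Filter

open Matrix Finset

/-!
Conditionally on `x`, the coordinates of `y` are independent Poisson variables, and the `n`-th
factorial moment of a Poisson variable of rate `r` is `r ^ n` (only the terms `k = m + n`
contribute, and `φ(m + n, n) / (m + n)! = 1 / m!`). Hence the inner series equals
`∏ⱼ exp(xⱼ) ^ Nⱼ = exp ⟪N, x⟫`, and the claim is the moment generating function of `N(μ, Θ⁻¹)`.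
Completing the square turns `gaussDensity Θ μ x * exp ⟪v, x⟫` into
`exp (⟪v, μ⟫ + ⟪v, Θ⁻¹ v⟫ / 2) * gaussDensity Θ (μ + Θ⁻¹ v) x`, and a Gaussian density integrates
to `1`: writing `Θ = Bᵀ B`, the substitution `z = B (x - μ)` reduces it to the standard Gaussian
integral, with Jacobian `|det B| = √(det Θ)`.
-/

lemma fallFact_eq_descFactorial (y n : ℕ) : fallFact y n = y.descFactorial n := by
  induction n with
  | zero => simp [fallFact]
  | succ n ih =>
    rw [fallFact, prod_range_succ, ← fallFact, ih, Nat.descFactorial_succ, Nat.cast_mul, mul_comm]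
    rcases le_or_gt n y with h | h
    · rw [Nat.cast_sub h]
    · simp [Nat.descFactorial_eq_zero_iff_lt.mpr h]

lemma fallFact_nonneg (y n : ℕ) : 0 ≤ fallFact y n :=
  fallFact_eq_descFactorial y n ▸ Nat.cast_nonneg _

lemma poissonPMF_nonneg {r : ℝ} (hr : 0 ≤ r) (k : ℕ) : 0 ≤ poissonPMF r k := by
  unfold poissonPMF
  positivity

lemma hasSum_poissonPMF (r : ℝ) : HasSum (poissonPMF r) 1 := by
  have h := (NormedSpace.expSeries_div_hasSum_exp r).mul_left (Real.exp (-r))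
  rw [← Real.exp_eq_exp_ℝ, ← Real.exp_add, neg_add_cancel, Real.exp_zero] at h
  exact h.congr_fun fun k => mul_div_assoc _ _ _

lemma poissonPMF_add_mul_descFactorial (r : ℝ) (m n : ℕ) :
    poissonPMF r (m + n) * (m + n).descFactorial n = r ^ n * poissonPMF r m := by
  have hfac : ((m + n).factorial : ℝ) = m.factorial * (m + n).descFactorial n := by
    exact_mod_cast (Nat.add_sub_cancel m n ▸
      Nat.factorial_mul_descFactorial (Nat.le_add_left n m)).symm
  have hdesc : ((m + n).descFactorial n : ℝ) ≠ 0 := by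
    exact_mod_cast (Nat.descFactorial_pos.mpr (Nat.le_add_left n m)).ne'
  rw [poissonPMF, poissonPMF, hfac]
  field_simp
  ring

lemma hasSum_poissonPMF_mul_fallFact (r : ℝ) (n : ℕ) :
    HasSum (fun k => poissonPMF r k * fallFact k n) (r ^ n) := by
  simp only [fallFact_eq_descFactorial]
  rw [← hasSum_nat_add_iff' n, sum_eq_zero fun k hk => ?_, sub_zero]
  · simpa only [poissonPMF_add_mul_descFactorial, mul_one] using
      (hasSum_poissonPMF r).mul_left (r ^ n)
  · rw [Nat.descFactorial_eq_zero_iff_lt.mpr (mem_range.mp hk), Nat.cast_zero, mul_zero]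

lemma hasSum_fin_pi_prod_of_nonneg {β : Type*} {p : ℕ} {f : Fin p → β → ℝ} {a : Fin p → ℝ}
    (hf : ∀ j, HasSum (f j) (a j)) (hf₀ : ∀ j, 0 ≤ f j) :
    HasSum (fun y : Fin p → β => ∏ j, f j (y j)) (∏ j, a j) := by
  induction p with
  | zero => simp [hasSum_unique]
  | succ p ih =>
    have htail := ih (fun j => hf j.succ) (fun j => hf₀ j.succ)
    have htail₀ : 0 ≤ fun y : Fin p → β => ∏ j : Fin p, f j.succ (y j) :=
      fun y => prod_nonneg fun j _ => hf₀ j.succ (y j)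
    have hsummable := (hf 0).summable.mul_of_nonneg htail.summable (hf₀ 0) htail₀
    have hprod := (hf 0).mul htail hsummable
    rw [← (Fin.consEquiv fun _ => β).hasSum_iff, Fin.prod_univ_succ]
    exact hprod.congr_fun fun z => by simp [Fin.consEquiv, Fin.prod_univ_succ]

lemma hasSum_prod_poissonPMF_mul_prod_fallFact {p : ℕ} {r : Fin p → ℝ} (hr : 0 ≤ r)
    (N : Fin p → ℕ) :
    HasSum (fun y : Fin p → ℕ => (∏ j, poissonPMF (r j) (y j)) * ∏ j, fallFact (y j) (N j))
      (∏ j, r j ^ N j) := by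
  have hnonneg (j : Fin p) : 0 ≤ fun k => poissonPMF (r j) k * fallFact k (N j) :=
    fun k => mul_nonneg (poissonPMF_nonneg (hr j) k) (fallFact_nonneg k (N j))
  have h := hasSum_fin_pi_prod_of_nonneg (fun j => hasSum_poissonPMF_mul_fallFact _ _) hnonneg
  simpa only [prod_mul_distrib] using h

lemma Matrix.IsSymm.dotProduct_mulVec_comm {n R : Type*} [Fintype n] [CommSemiring R]
    {A : Matrix n n R} (hA : A.IsSymm) (u w : n → R) : w ⬝ᵥ A *ᵥ u = u ⬝ᵥ A *ᵥ w := by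
  rw [dotProduct_comm, ← vecMul_transpose, ← dotProduct_mulVec, hA.eq]

lemma Matrix.IsSymm.sub_dotProduct_mulVec_sub {n R : Type*} [Fintype n] [CommRing R]
    {A : Matrix n n R} (hA : A.IsSymm) (u w : n → R) :
    (u - w) ⬝ᵥ A *ᵥ (u - w) = u ⬝ᵥ A *ᵥ u - 2 * (u ⬝ᵥ A *ᵥ w) + w ⬝ᵥ A *ᵥ w := by
  simp only [mulVec_sub, dotProduct_sub, sub_dotProduct, hA.dotProduct_mulVec_comm u w]
  ring

lemma gaussDensity_mul_exp_dotProduct {p : ℕ} {Θ : Matrix (Fin p) (Fin p) ℝ} (hΘ : Θ.IsSymm)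
    (hdet : IsUnit Θ.det) (μ v x : Fin p → ℝ) :
    gaussDensity Θ μ x * Real.exp (v ⬝ᵥ x) =
      Real.exp (v ⬝ᵥ μ + v ⬝ᵥ Θ⁻¹ *ᵥ v / 2) * gaussDensity Θ (μ + Θ⁻¹ *ᵥ v) x := by
  set w := Θ⁻¹ *ᵥ v
  have hw : Θ *ᵥ w = v := by rw [mulVec_mulVec, mul_nonsing_inv _ hdet, one_mulVec]
  have hexp : -((x - μ) ⬝ᵥ Θ *ᵥ (x - μ)) / 2 + v ⬝ᵥ x =
      v ⬝ᵥ μ + v ⬝ᵥ w / 2 + -((x - μ - w) ⬝ᵥ Θ *ᵥ (x - μ - w)) / 2 := by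
    rw [hΘ.sub_dotProduct_mulVec_sub (x - μ) w, hw, dotProduct_comm w v, dotProduct_comm (x - μ) v,
      dotProduct_sub]
    ring
  rw [gaussDensity, gaussDensity, ← sub_sub, mul_assoc, ← Real.exp_add, hexp, Real.exp_add]
  ring

lemma integral_comp_mulVec {ι E : Type*} [Fintype ι] [DecidableEq ι] [NormedAddCommGroup E]
    [NormedSpace ℝ E] {A : Matrix ι ι ℝ} (hA : A.det ≠ 0) (f : (ι → ℝ) → E) :
    ∫ x, f (A *ᵥ x) = |A.det|⁻¹ • ∫ x, f x := by
  let e := (A.toLinearEquiv' (A.invertibleOfIsUnitDet hA.isUnit)).toContinuousLinearEquiv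
  have hemb : MeasurableEmbedding (A *ᵥ ·) := e.toHomeomorph.measurableEmbedding
  have hmap : Measure.map (A *ᵥ ·) volume = ENNReal.ofReal |A.det|⁻¹ • volume := by
    have h := Measure.map_linearMap_addHaar_pi_eq_smul_addHaar
      (f := toLin' A) (by rwa [LinearMap.det_toLin']) volume
    rwa [LinearMap.det_toLin', abs_inv] at h
  rw [← hemb.integral_map, hmap, integral_smul_measure, ENNReal.toReal_ofReal (by positivity)]

lemma integral_exp_neg_dotProduct_self_div_two (ι : Type*) [Fintype ι] :
    ∫ z : ι → ℝ, Real.exp (-(z ⬝ᵥ z) / 2) = Real.sqrt (2 * Real.pi) ^ Fintype.card ι := by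
  have hprod (z : ι → ℝ) : Real.exp (-(z ⬝ᵥ z) / 2) = ∏ j, Real.exp (-(1 / 2) * z j ^ 2) := by
    rw [← Real.exp_sum, dotProduct, ← sum_neg_distrib, sum_div]
    congr 1
    exact sum_congr rfl fun j _ => by ring
  simp_rw [hprod]
  rw [integral_fintype_prod_volume_eq_pow (fun t => Real.exp (-(1 / 2) * t ^ 2)),
    integral_gaussian, one_div, div_inv_eq_mul, mul_comm]

open scoped MatrixOrder in
lemma Matrix.PosSemidef.exists_eq_transpose_mul_self {n : Type*} [Fintype n] [DecidableEq n]
    {A : Matrix n n ℝ} (hA : A.PosSemidef) : ∃ B : Matrix n n ℝ, A = Bᵀ * B := by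
  obtain ⟨B, hB⟩ := CStarAlgebra.nonneg_iff_eq_star_mul_self.mp hA.nonneg
  exact ⟨B, by rwa [star_eq_conjTranspose, conjTranspose_eq_transpose_of_trivial] at hB⟩

lemma integral_gaussDensity {p : ℕ} {Θ : Matrix (Fin p) (Fin p) ℝ} (hΘ : Θ.PosDef)
    (μ : Fin p → ℝ) : ∫ x, gaussDensity Θ μ x = 1 := by
  have hdetΘ := hΘ.det_pos
  obtain ⟨B, rfl⟩ := hΘ.posSemidef.exists_eq_transpose_mul_self
  rw [det_mul, det_transpose, ← sq] at hdetΘ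
  have hB : B.det ≠ 0 := fun h => by simp [h] at hdetΘ
  have hquad (u : Fin p → ℝ) : u ⬝ᵥ (Bᵀ * B) *ᵥ u = (B *ᵥ u) ⬝ᵥ (B *ᵥ u) := by
    rw [← mulVec_mulVec, dotProduct_mulVec, vecMul_transpose]
  have hconst : (2 * Real.pi) ^ (-(p : ℝ) / 2) * Real.sqrt (2 * Real.pi) ^ p = 1 := by
    rw [Real.sqrt_eq_rpow, ← Real.rpow_mul_natCast (by positivity),
      ← Real.rpow_add (by positivity), show -(p : ℝ) / 2 + 1 / 2 * p = 0 by ring, Real.rpow_zero]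
  let g (z : Fin p → ℝ) := Real.exp (-(z ⬝ᵥ z) / 2)
  calc ∫ x, gaussDensity (Bᵀ * B) μ x
      = (2 * Real.pi) ^ (-(p : ℝ) / 2) * |B.det| * ∫ x, g (B *ᵥ (x - μ)) := by
        simp only [gaussDensity, hquad, det_mul, det_transpose, ← sq, Real.sqrt_sq_eq_abs,
          integral_const_mul, g]
    _ = (2 * Real.pi) ^ (-(p : ℝ) / 2) * |B.det| * (|B.det|⁻¹ * Real.sqrt (2 * Real.pi) ^ p) := by
        rw [integral_sub_right_eq_self (fun x => g (B *ᵥ x)), integral_comp_mulVec hB,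
          integral_exp_neg_dotProduct_self_div_two, Fintype.card_fin, smul_eq_mul]
    _ = 1 := by
        rw [mul_assoc, mul_inv_cancel_left₀ (abs_ne_zero.mpr hB), hconst]

lemma integral_gaussDensity_mul_exp_dotProduct {p : ℕ} {Θ : Matrix (Fin p) (Fin p) ℝ}
    (hΘ : Θ.PosDef) (μ v : Fin p → ℝ) :
    ∫ x, gaussDensity Θ μ x * Real.exp (v ⬝ᵥ x) = Real.exp (v ⬝ᵥ μ + v ⬝ᵥ Θ⁻¹ *ᵥ v / 2) := by
  simp_rw [gaussDensity_mul_exp_dotProduct (isHermitian_iff_isSymm.mp hΘ.isHermitian)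
    hΘ.det_pos.ne'.isUnit]
  rw [integral_const_mul, integral_gaussDensity hΘ, mul_one]

theorem stmt4_general {p : ℕ} (Θ : Matrix (Fin p) (Fin p) ℝ) (hΘ : Θ.PosDef)
    (μ : Fin p → ℝ) (N : Fin p → ℕ) :
    (∫ x : Fin p → ℝ, gaussDensity Θ μ x *
        ∑' y : Fin p → ℕ,
          (∏ j, poissonPMF (Real.exp (x j)) (y j)) * ∏ j, fallFact (y j) (N j)) =
      Real.exp ((∑ j, (N j : ℝ) * μ j) +
        dotProduct (fun j => (N j : ℝ)) (Θ⁻¹.mulVec fun j => (N j : ℝ)) / 2) := by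
  have hmoment (x : Fin p → ℝ) :
      ∑' y : Fin p → ℕ, (∏ j, poissonPMF (Real.exp (x j)) (y j)) * ∏ j, fallFact (y j) (N j) =
        Real.exp ((fun j => (N j : ℝ)) ⬝ᵥ x) := by
    rw [(hasSum_prod_poissonPMF_mul_prod_fallFact (fun j => (Real.exp_pos (x j)).le) N).tsum_eq,
      dotProduct, Real.exp_sum]
    exact prod_congr rfl fun j _ => (Real.exp_nat_mul (x j) (N j)).symm
  simp_rw [hmoment]
  exact integral_gaussDensity_mul_exp_dotProduct hΘ μ _

/-- Factorial moments of the Poisson log-normal distribution: for x ~ N(μ, Θ⁻¹) and,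
given x, independent Poisson coordinates y_j ~ Poisson(exp(x_j)), one has
E[∏_j φ(y_j, N_j)] = exp(Nᵀμ + NᵀΘ⁻¹N/2). -/
theorem stmt4 {p : ℕ} (hp : 0 < p) (Θ : Matrix (Fin p) (Fin p) ℝ) (hΘ : Θ.PosDef)
    (μ : Fin p → ℝ) (N : Fin p → ℕ) :
    (∫ x : Fin p → ℝ, gaussDensity Θ μ x *
        ∑' y : Fin p → ℕ,
          (∏ j, poissonPMF (Real.exp (x j)) (y j)) * ∏ j, fallFact (y j) (N j)) =
      Real.exp ((∑ j, (N j : ℝ) * μ j) +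
        dotProduct (fun j => (N j : ℝ)) (Θ⁻¹.mulVec fun j => (N j : ℝ)) / 2) :=
  stmt4_general Θ hΘ μ N
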